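/- There exists l ∈ (1,2) such that for the function F_1 above (with δ > 0 small enough), 1 < l ≤ F_1'(s) s / F_1(s) ≤ 2 for all s > 0. -/

import Mathlib

noncomputable def F1 (δ s : ℝ) : ℝ :=
  if s = 0 then 0
  else if |s| < δ then -(1/2) * s^2 * Real.log (s^2)
  else -(1/2) * s^2 * (Real.log (δ^2) + 3) + 2 * δ * |s| - δ^2 / 2

/-!
On `(0, δ)` the ratio is `F₁'(s) s / F₁(s) = 2 + 2 / log (s²)`, which lies in `[3/2, 2)` as soon as
`log (s²) ≤ -4`. For `s ≥ δ` the function is the second-order Taylor polynomial of the logarithmic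
branch at `δ`, so the two branches glue differentiably, and with `C = log (δ²) + 3 ≤ -3` the ratio
bounds reduce to `δ² ≤ 2 δ s` and `0 ≤ (3s - 2δ)² + 5δ²`. Hence `δ₀ = exp (-3)` and `l = 3/2` work.
-/

open Real Set Filter Topology

theorem hasDerivAt_of_eventuallyEq_nhdsLE_nhdsGE {f g h : ℝ → ℝ} {f' x : ℝ}
    (hg : HasDerivAt g f' x) (hh : HasDerivAt h f' x)
    (hfg : f =ᶠ[𝓝[≤] x] g) (hfh : f =ᶠ[𝓝[≥] x] h) : HasDerivAt f f' x := by
  have hle := hg.hasDerivWithinAt.congr_of_eventuallyEq_of_mem hfg self_mem_Iic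
  have hge := hh.hasDerivWithinAt.congr_of_eventuallyEq_of_mem hfh self_mem_Ici
  simpa only [Iic_union_Ici, hasDerivWithinAt_univ] using hle.union hge

theorem hasDerivAt_neg_half_sq_mul_log_sq {s : ℝ} (hs : s ≠ 0) :
    HasDerivAt (fun x => -(1/2) * x^2 * log (x^2)) (-s * log (s^2) - s) s := by
  have hsq : HasDerivAt (fun x : ℝ => x^2) (2 * s) s := by simpa using hasDerivAt_pow 2 s
  refine ((hsq.const_mul (-(1/2))).mul (hsq.log (pow_ne_zero 2 hs))).congr_deriv ?_
  field_simp
  ring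

theorem hasDerivAt_quadratic (a b c s : ℝ) :
    HasDerivAt (fun x => a * x^2 + b * x + c) (2 * a * s + b) s := by
  have hsq : HasDerivAt (fun x : ℝ => x^2) (2 * s) s := by simpa using hasDerivAt_pow 2 s
  refine (((hsq.const_mul a).add ((hasDerivAt_id s).const_mul b)).add_const c).congr_deriv ?_
  ring

section F1

variable {δ s : ℝ}

theorem F1_eq_of_le (hs : 0 < s) (hsδ : s ≤ δ) : F1 δ s = -(1/2) * s^2 * log (s^2) := by
  rcases hsδ.lt_or_eq with hlt | rfl
  · rw [F1, if_neg hs.ne', if_pos (by rwa [abs_of_pos hs])]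
  · rw [F1, if_neg hs.ne', if_neg (by simp [abs_of_pos hs]), abs_of_pos hs]
    ring

theorem F1_eq_of_ge (hδ : 0 < δ) (hδs : δ ≤ s) :
    F1 δ s = -(1/2) * s^2 * (log (δ^2) + 3) + 2 * δ * s - δ^2 / 2 := by
  have hs : 0 < s := hδ.trans_le hδs
  rw [F1, if_neg hs.ne', if_neg (by rw [abs_of_pos hs]; exact hδs.not_gt), abs_of_pos hs]

theorem hasDerivAt_F1_of_lt (hs : 0 < s) (hsδ : s < δ) :
    HasDerivAt (F1 δ) (-s * log (s^2) - s) s := by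
  refine (hasDerivAt_neg_half_sq_mul_log_sq hs.ne').congr_of_eventuallyEq ?_
  filter_upwards [Ioo_mem_nhds hs hsδ] with x hx
  exact F1_eq_of_le hx.1 hx.2.le

theorem hasDerivAt_F1_of_ge (hδ : 0 < δ) (hδs : δ ≤ s) :
    HasDerivAt (F1 δ) (-(log (δ^2) + 3) * s + 2 * δ) s := by
  have hright : HasDerivAt (fun x => -(1/2) * (log (δ^2) + 3) * x^2 + 2 * δ * x + -(δ^2 / 2))
      (-(log (δ^2) + 3) * s + 2 * δ) s :=
    (hasDerivAt_quadratic _ _ _ s).congr_deriv (by ring)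
  have hF_right :
      F1 δ =ᶠ[𝓝[≥] s] fun x => -(1/2) * (log (δ^2) + 3) * x^2 + 2 * δ * x + -(δ^2 / 2) := by
    filter_upwards [self_mem_nhdsWithin] with x hx
    rw [F1_eq_of_ge hδ (hδs.trans hx)]
    ring
  rcases hδs.lt_or_eq with hlt | rfl
  · refine hright.congr_of_eventuallyEq ?_
    filter_upwards [Ioi_mem_nhds hlt] with x hx
    rw [F1_eq_of_ge hδ hx.le]
    ring
  · refine hasDerivAt_of_eventuallyEq_nhdsLE_nhdsGE (g := fun x => -(1/2) * x^2 * log (x^2))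
      ?_ hright ?_ hF_right
    · exact (hasDerivAt_neg_half_sq_mul_log_sq hδ.ne').congr_deriv (by ring)
    · filter_upwards [self_mem_nhdsWithin, mem_nhdsWithin_of_mem_nhds (Ioi_mem_nhds hδ)]
        with x hxδ hx
      exact F1_eq_of_le hx hxδ

end F1

theorem ratio_mem_Icc_of_log_branch {s L : ℝ} (hs : 0 < s) (hL : L ≤ -4) :
    3/2 ≤ (-s * L - s) * s / (-(1/2) * s^2 * L) ∧ (-s * L - s) * s / (-(1/2) * s^2 * L) ≤ 2 := by
  have hs2 : 0 < s^2 := by positivity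
  have hF : 0 < -(1/2) * s^2 * L := by nlinarith
  rw [le_div_iff₀ hF, div_le_iff₀ hF]
  constructor <;> nlinarith

theorem ratio_mem_Icc_of_quadratic_branch {δ s C : ℝ} (hδ : 0 < δ) (hδs : δ ≤ s) (hC : C ≤ -3) :
    3/2 ≤ (-C * s + 2 * δ) * s / (-(1/2) * s^2 * C + 2 * δ * s - δ^2 / 2) ∧
      (-C * s + 2 * δ) * s / (-(1/2) * s^2 * C + 2 * δ * s - δ^2 / 2) ≤ 2 := by
  have hs : 0 < s := hδ.trans_le hδs
  have hF : 0 < -(1/2) * s^2 * C + 2 * δ * s - δ^2 / 2 := by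
    nlinarith [mul_pos hs hs, mul_le_mul_of_nonneg_left hδs hδ.le]
  rw [le_div_iff₀ hF, div_le_iff₀ hF]
  constructor
  · nlinarith [sq_nonneg (3 * s - 2 * δ), mul_pos hs hs]
  · nlinarith [mul_le_mul_of_nonneg_left hδs hδ.le]

theorem stmt7 :
    ∃ δ₀ > (0:ℝ), ∀ δ : ℝ, 0 < δ → δ < δ₀ →
      ∃ l : ℝ, l ∈ Set.Ioo (1:ℝ) 2 ∧
        ∀ s : ℝ, 0 < s →
          l ≤ deriv (F1 δ) s * s / F1 δ s ∧ deriv (F1 δ) s * s / F1 δ s ≤ 2 := by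
  refine ⟨exp (-3), exp_pos _, fun δ hδ hδ₀ => ⟨3/2, by norm_num, fun s hs => ?_⟩⟩
  have hlog_sq {x : ℝ} (hx : 0 < x) (hxδ : x ≤ δ) : log (x^2) < -6 := by
    have := log_lt_log (hx.trans_le hxδ) hδ₀
    rw [log_exp] at this
    rw [log_pow]
    push_cast
    linarith [log_le_log hx hxδ]
  rcases lt_or_ge s δ with hsδ | hδs
  · rw [(hasDerivAt_F1_of_lt hs hsδ).deriv, F1_eq_of_le hs hsδ.le]
    exact ratio_mem_Icc_of_log_branch hs (by linarith [hlog_sq hs hsδ.le])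
  · rw [(hasDerivAt_F1_of_ge hδ hδs).deriv, F1_eq_of_ge hδ hδs]
    exact ratio_mem_Icc_of_quadratic_branch hδ hδs (by linarith [hlog_sq hδ le_rfl])
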